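/- Let Y : Ω → ℝ be integrable. Suppose that under the conditional measure ν := P(·|{T=1, C=1}), Y is conditionally independent of S given σ(W) and 0 < ν(S=1 | W) < 1 ν-a.s. Assume P(S=1, T=1, C=1) > 0 and P(S=0, T=1, C=1) > 0, and that the law of W under P(·|{S=0, T=1, C=1}) is absolutely continuous with respect to its law under P(·|{S=1, T=1, C=1}). Let g : 𝒲 → ℝ be a version of E[Y | {S=1, T=1, C=1}, W]. Then E[Y | S=0, T=1, C=1] = E[g(W) | S=0, T=1, C=1]; that is, strong ignorability of sample assignment transfers the covariate-conditional response surface from the RCT (S=1) to the population (S=0). -/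

import Mathlib

/-!
Under `ν = P[|T = 1, C = 1]`, `Y` and `S` are independent under the conditional-expectation
kernel given `W` at almost every point, so computing pointwise under that kernel gives
`ν[1_{S = s} Y | W] = ν[Y | W] · ν[S = s | W] = ν[1_{S = s} ν[Y | W] | W]`.
Hence `ν[Y | W]` is still a version of the conditional expectation of `Y` after conditioning
on `{S = s}`, for both values of `s`. For `s = 1` this identifies `g ∘ W` with `ν[Y | W]`
almost surely on the RCT; the exceptional set has the form `W ⁻¹' u`, so absolute continuity
of the law of `W` carries the identification over to the population, and `s = 0` then gives
the claim.
-/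

open MeasureTheory ProbabilityTheory

section Cond

variable {Ω : Type*} {mΩ : MeasurableSpace Ω} {μ : Measure Ω} {s : Set Ω}

theorem MeasureTheory.Integrable.cond {f : Ω → ℝ} (hf : Integrable f μ) (s : Set Ω) :
    Integrable f μ[|s] := by
  by_cases hs : μ s = 0
  · simp [cond_eq_zero_of_meas_eq_zero hs]
  · exact hf.restrict.smul_measure (ENNReal.inv_ne_top.mpr hs)

theorem ProbabilityTheory.setIntegral_cond (hs : MeasurableSet s) {B : Set Ω}
    (hB : MeasurableSet B) (f : Ω → ℝ) :
    ∫ ω in B, f ω ∂μ[|s] = (μ s)⁻¹.toReal * ∫ ω in B, s.indicator f ω ∂μ := by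
  rw [cond, Measure.restrict_smul, integral_smul_measure, Measure.restrict_restrict hB,
    setIntegral_indicator hs, smul_eq_mul]

end Cond

theorem MeasureTheory.Measure.AbsolutelyContinuous.ae_comp_of_map {Ω 𝒲 : Type*}
    [MeasurableSpace Ω] [MeasurableSpace 𝒲] {μ ν : Measure Ω} {W : Ω → 𝒲}
    (hW : Measurable W) (hac : μ.map W ≪ ν.map W) {p : 𝒲 → Prop}
    (hp : MeasurableSet {x | p x}) (h : ∀ᵐ ω ∂ν, p (W ω)) : ∀ᵐ ω ∂μ, p (W ω) :=
  ae_of_ae_map hW.aemeasurable (hac.ae_le ((ae_map_iff hW.aemeasurable hp).mpr h))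

namespace ProbabilityTheory

variable {Ω : Type*} {m' mΩ : MeasurableSpace Ω} [StandardBorelSpace Ω] {hm' : m' ≤ mΩ}
  {μ : Measure Ω} [IsFiniteMeasure μ]

theorem CondIndepFun.congr {β β' : Type*} [MeasurableSpace β] [MeasurableSpace β']
    {f f' : Ω → β} {g g' : Ω → β'} (h : CondIndepFun m' hm' f g μ)
    (hf : f =ᵐ[μ] f') (hg : g =ᵐ[μ] g') : CondIndepFun m' hm' f' g' μ := by
  have hκ : condExpKernel μ m' ∘ₘ μ.trim hm' = μ := condExpKernel_comp_trim hm'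
  exact Kernel.IndepFun.congr' h (Measure.ae_ae_of_ae_comp (by rwa [hκ]))
    (Measure.ae_ae_of_ae_comp (by rwa [hκ]))

theorem CondIndepFun.ae_indepFun_condExpKernel {β β' : Type*} [MeasurableSpace β]
    [MeasurableSpace β'] [MeasurableSpace.CountableOrCountablyGenerated Ω (β × β')]
    {f : Ω → β} {g : Ω → β'} (h : CondIndepFun m' hm' f g μ)
    (hf : Measurable f) (hg : Measurable g) :
    ∀ᵐ ω ∂μ, IndepFun f g (condExpKernel μ m' ω) := by
  have hmap := (condIndepFun_iff_map_prod_eq_prod_map_map hf hg).mp h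
  filter_upwards [ae_of_ae_trim hm' hmap] with ω hω
  rw [indepFun_iff_map_prod_eq_prod_map_map hf.aemeasurable hg.aemeasurable]
  simpa [Kernel.map_apply _ (hf.prodMk hg), Kernel.map_apply _ hf, Kernel.map_apply _ hg,
    Kernel.prod_apply] using hω

theorem CondIndepFun.condExp_mul_of_measurable {X Z : Ω → ℝ} (h : CondIndepFun m' hm' X Z μ)
    (hX : Measurable X) (hZ : Measurable Z) (hXi : Integrable X μ) (hZi : Integrable Z μ)
    (hXZ : Integrable (X * Z) μ) :
    μ[X * Z | m'] =ᵐ[μ] μ[X | m'] * μ[Z | m'] := by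
  filter_upwards [condExp_ae_eq_integral_condExpKernel hm' hXZ,
    condExp_ae_eq_integral_condExpKernel hm' hXi, condExp_ae_eq_integral_condExpKernel hm' hZi,
    h.ae_indepFun_condExpKernel hX hZ] with ω hXZω hXω hZω hind
  rw [hXZω, Pi.mul_apply, hXω, hZω]
  exact hind.integral_mul_eq_mul_integral hX.aestronglyMeasurable hZ.aestronglyMeasurable

theorem CondIndepFun.condExp_mul {X Z : Ω → ℝ} (h : CondIndepFun m' hm' X Z μ)
    (hXi : Integrable X μ) (hZi : Integrable Z μ) (hXZ : Integrable (X * Z) μ) :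
    μ[X * Z | m'] =ᵐ[μ] μ[X | m'] * μ[Z | m'] := by
  have hX := hXi.aemeasurable
  have hZ := hZi.aemeasurable
  have hXZ_mk : X * Z =ᵐ[μ] hX.mk X * hZ.mk Z := hX.ae_eq_mk.mul hZ.ae_eq_mk
  calc μ[X * Z | m'] =ᵐ[μ] μ[hX.mk X * hZ.mk Z | m'] := condExp_congr_ae hXZ_mk
    _ =ᵐ[μ] μ[hX.mk X | m'] * μ[hZ.mk Z | m'] :=
        (h.congr hX.ae_eq_mk hZ.ae_eq_mk).condExp_mul_of_measurable hX.measurable_mk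
          hZ.measurable_mk (hXi.congr hX.ae_eq_mk) (hZi.congr hZ.ae_eq_mk) (hXZ.congr hXZ_mk)
    _ =ᵐ[μ] μ[X | m'] * μ[Z | m'] :=
        (condExp_congr_ae hX.ae_eq_mk.symm).mul (condExp_congr_ae hZ.ae_eq_mk.symm)

theorem CondIndepFun.setIntegral_cond_preimage_condExp {β : Type*} [MeasurableSpace β]
    {Y : Ω → ℝ} {S : Ω → β} (h : CondIndepFun m' hm' Y S μ) (hYi : Integrable Y μ)
    (hS : Measurable S) {t : Set β} (ht : MeasurableSet t)
    {B : Set Ω} (hB : MeasurableSet[m'] B) :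
    ∫ ω in B, (μ[Y | m']) ω ∂μ[|S ⁻¹' t] = ∫ ω in B, Y ω ∂μ[|S ⁻¹' t] := by
  set A := S ⁻¹' t
  have hA : MeasurableSet A := hS ht
  have hmul : ∀ f : Ω → ℝ, f * A.indicator 1 = A.indicator f := fun f => by
    ext ω; by_cases hω : ω ∈ A <;> simp [hω]
  have hA1 : Integrable (A.indicator (1 : Ω → ℝ)) μ := (integrable_const 1).indicator hA
  have hindep : CondIndepFun m' hm' Y (A.indicator (1 : Ω → ℝ)) μ :=
    h.comp measurable_id (measurable_const.indicator ht)
  have hYA : μ[A.indicator (μ[Y | m']) | m'] =ᵐ[μ] μ[A.indicator Y | m'] := by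
    rw [← hmul Y, ← hmul (μ[Y | m'])]
    calc μ[μ[Y | m'] * A.indicator 1 | m'] =ᵐ[μ] μ[Y | m'] * μ[A.indicator 1 | m'] :=
          condExp_mul_of_stronglyMeasurable_left stronglyMeasurable_condExp
            (by rw [hmul]; exact integrable_condExp.indicator hA) hA1
      _ =ᵐ[μ] μ[Y * A.indicator 1 | m'] :=
          (hindep.condExp_mul hYi hA1 (by rw [hmul]; exact hYi.indicator hA)).symm
  rw [setIntegral_cond hA (hm' B hB), setIntegral_cond hA (hm' B hB),
    ← setIntegral_condExp hm' (integrable_condExp.indicator hA) hB,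
    ← setIntegral_condExp hm' (hYi.indicator hA) hB,
    setIntegral_congr_ae (hm' B hB) (hYA.mono fun _ hω _ => hω)]

theorem CondIndepFun.condExp_ae_eq_condExp_cond_preimage {β : Type*} [MeasurableSpace β]
    {Y : Ω → ℝ} {S : Ω → β} (h : CondIndepFun m' hm' Y S μ) (hYi : Integrable Y μ)
    (hS : Measurable S) {t : Set β} (ht : MeasurableSet t) :
    μ[Y | m'] =ᵐ[μ[|S ⁻¹' t]] (μ[|S ⁻¹' t])[Y | m'] :=
  ae_eq_condExp_of_forall_setIntegral_eq hm' (hYi.cond _)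
    (fun _ _ _ => (integrable_condExp.cond _).integrableOn)
    (fun _ hB _ => h.setIntegral_cond_preimage_condExp hYi hS ht hB)
    stronglyMeasurable_condExp.aestronglyMeasurable

end ProbabilityTheory

theorem strong_ignorability_transfer_general
    {Ω 𝒲 : Type*} [MeasurableSpace Ω] [StandardBorelSpace Ω]
    [MeasurableSpace 𝒲]
    (P : Measure Ω) [IsProbabilityMeasure P]
    (S T C : Ω → Bool) (hS : Measurable S) (hT : Measurable T) (hC : Measurable C)
    (W : Ω → 𝒲) (hW : Measurable W)
    (Y : Ω → ℝ) (hYint : Integrable Y P)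
    (hCI : CondIndepFun (MeasurableSpace.comap W inferInstance) hW.comap_le Y S
      (P[|{ω | T ω = true ∧ C ω = true}]))
    (hac : (P[|{ω | S ω = false ∧ T ω = true ∧ C ω = true}]).map W ≪
      (P[|{ω | S ω = true ∧ T ω = true ∧ C ω = true}]).map W)
    (g : 𝒲 → ℝ) (hgm : Measurable g)
    (hg : (fun ω => g (W ω)) =ᵐ[P[|{ω | S ω = true ∧ T ω = true ∧ C ω = true}]]
      (P[|{ω | S ω = true ∧ T ω = true ∧ C ω = true}])[Y |
        MeasurableSpace.comap W inferInstance]) :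
    ∫ ω, Y ω ∂(P[|{ω | S ω = false ∧ T ω = true ∧ C ω = true}]) =
      ∫ ω, g (W ω) ∂(P[|{ω | S ω = false ∧ T ω = true ∧ C ω = true}]) := by
  set ν := P[|{ω | T ω = true ∧ C ω = true}]
  have hTC : MeasurableSet {ω | T ω = true ∧ C ω = true} :=
    (hT (measurableSet_singleton true)).inter (hC (measurableSet_singleton true))
  have hsplit : ∀ b, P[|{ω | S ω = b ∧ T ω = true ∧ C ω = true}] = ν[|S ⁻¹' {b}] := by
    intro b
    rw [cond_cond_eq_cond_inter hTC (hS (measurableSet_singleton b))]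
    congr 1
    ext ω
    simp [and_comm]
  have hYν : Integrable Y ν := hYint.cond _
  obtain ⟨r, hr, hνY⟩ : ∃ r : 𝒲 → ℝ, Measurable r ∧
      ν[Y | MeasurableSpace.comap W inferInstance] = r ∘ W :=
    stronglyMeasurable_condExp.measurable.exists_eq_measurable_comp
  have hgr_rct :
      ∀ᵐ ω ∂P[|{ω | S ω = true ∧ T ω = true ∧ C ω = true}], g (W ω) = r (W ω) := by
    rw [hsplit] at hg ⊢
    exact hg.trans
      (hνY ▸ hCI.condExp_ae_eq_condExp_cond_preimage hYν hS (measurableSet_singleton true)).symm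
  have hgr_pop := hac.ae_comp_of_map hW (measurableSet_eq_fun hgm hr) hgr_rct
  rw [hsplit] at hgr_pop ⊢
  calc ∫ ω, Y ω ∂ν[|S ⁻¹' {false}] = ∫ ω, r (W ω) ∂ν[|S ⁻¹' {false}] := by
        have h_pop := hCI.setIntegral_cond_preimage_condExp hYν hS
          (measurableSet_singleton false) MeasurableSet.univ
        rw [Measure.restrict_univ, hνY] at h_pop
        exact h_pop.symm
    _ = ∫ ω, g (W ω) ∂ν[|S ⁻¹' {false}] :=
        integral_congr_ae (hgr_pop.mono fun _ hω => hω.symm)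

/-- Strong ignorability of sample assignment transfers the covariate-conditional response
surface from the RCT (`S=1`) to the population (`S=0`): if under `ν := P[·|T=1, C=1]` the
integrable outcome `Y` is conditionally independent of `S` given `σ(W)` with the positivity
condition `0 < ν(S=1|W) < 1` a.s., and the law of `W` given `{S=0, T=1, C=1}` is absolutely
continuous w.r.t. its law given `{S=1, T=1, C=1}`, then for any version `g` of
`E[Y | S=1, T=1, C=1, W]` we have `E[Y | S=0, T=1, C=1] = E[g(W) | S=0, T=1, C=1]`. -/
theorem strong_ignorability_transfer
    {Ω 𝒲 : Type*} [MeasurableSpace Ω] [StandardBorelSpace Ω]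
    [MeasurableSpace 𝒲] [StandardBorelSpace 𝒲]
    (P : Measure Ω) [IsProbabilityMeasure P]
    (S T C : Ω → Bool) (hS : Measurable S) (hT : Measurable T) (hC : Measurable C)
    (W : Ω → 𝒲) (hW : Measurable W)
    (Y : Ω → ℝ) (hYint : Integrable Y P)
    (hCI : CondIndepFun (MeasurableSpace.comap W inferInstance) hW.comap_le Y S
      (P[|{ω | T ω = true ∧ C ω = true}]))
    (hpos : ∀ᵐ ω ∂(P[|{ω | T ω = true ∧ C ω = true}]),
      0 < ((P[|{ω | T ω = true ∧ C ω = true}])[({ω | S ω = true}).indicator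
            (fun _ => (1 : ℝ)) | MeasurableSpace.comap W inferInstance]) ω ∧
      ((P[|{ω | T ω = true ∧ C ω = true}])[({ω | S ω = true}).indicator
            (fun _ => (1 : ℝ)) | MeasurableSpace.comap W inferInstance]) ω < 1)
    (hpos1 : 0 < P {ω | S ω = true ∧ T ω = true ∧ C ω = true})
    (hpos0 : 0 < P {ω | S ω = false ∧ T ω = true ∧ C ω = true})
    (hac : (P[|{ω | S ω = false ∧ T ω = true ∧ C ω = true}]).map W ≪
      (P[|{ω | S ω = true ∧ T ω = true ∧ C ω = true}]).map W)
    (g : 𝒲 → ℝ) (hgm : Measurable g)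
    (hg : (fun ω => g (W ω)) =ᵐ[P[|{ω | S ω = true ∧ T ω = true ∧ C ω = true}]]
      (P[|{ω | S ω = true ∧ T ω = true ∧ C ω = true}])[Y |
        MeasurableSpace.comap W inferInstance]) :
    ∫ ω, Y ω ∂(P[|{ω | S ω = false ∧ T ω = true ∧ C ω = true}]) =
      ∫ ω, g (W ω) ∂(P[|{ω | S ω = false ∧ T ω = true ∧ C ω = true}]) :=
  strong_ignorability_transfer_general P S T C hS hT hC W hW Y hYint hCI hac g hgm hg
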